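/- Fix a tabular quasi-normal modal logic L = Log(𝓕_L) with 𝓕_L a finite set of finite rooted frames (roots named 0), a signature σ, and a σ-encoding (Γ, {Δ_Φ}_{Φ∈Γ}) for L. Let F ∈ 𝓕_L, ξ ∈ PL(σ_F), and let (M,0) be a model based on a frame of 𝓕_L. Then the following are equivalent: (1) M,0 ⊨ rt_{F,L}(ξ); (2) there is a model M' based on the frame F such that M,0 ∼_σ M',0 and v_{M'} ⊨ ξ. -/
import Mathlib


inductive MForm (α : Type) : Type
  | top : MForm α
  | atom : α → MForm α
  | neg : MForm α → MForm α
  | and : MForm α → MForm α → MForm α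
  | box : MForm α → MForm α
deriving DecidableEq

namespace MForm

def imp {α : Type} (φ ψ : MForm α) : MForm α := neg (and φ (neg ψ))

def dia {α : Type} (φ : MForm α) : MForm α := neg (box (neg φ))

def sig {α : Type} [DecidableEq α] : MForm α → Finset α
  | top => ∅
  | atom p => {p}
  | neg φ => sig φ
  | and φ ψ => sig φ ∪ sig ψ
  | box φ => sig φ

def IsProp {α : Type} : MForm α → Prop
  | top => True
  | atom _ => True
  | neg φ => IsProp φ
  | and φ ψ => IsProp φ ∧ IsProp ψ
  | box _ => False

def subf {α : Type} [DecidableEq α] : MForm α → Finset (MForm α)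
  | top => {top}
  | atom p => {atom p}
  | neg φ => insert (neg φ) (subf φ)
  | and φ ψ => insert (and φ ψ) (subf φ ∪ subf ψ)
  | box φ => insert (box φ) (subf φ)

/-- The dag-size of a formula: the number of its distinct subformulas. -/
def dagSize {α : Type} [DecidableEq α] (φ : MForm α) : ℕ := (subf φ).card

end MForm

def psat {α : Type} (v : α → Prop) : MForm α → Prop
  | .top => True
  | .atom p => v p
  | .neg φ => ¬ psat v φ
  | .and φ ψ => psat v φ ∧ psat v ψ
  | .box _ => True

/-- Propositional tautology. -/
def PTaut {α : Type} (φ : MForm α) : Prop := ∀ v : α → Prop, psat v φ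

def bigAnd {α : Type} : List (MForm α) → MForm α
  | [] => .top
  | φ :: l => .and φ (bigAnd l)

def bigOr {α : Type} (l : List (MForm α)) : MForm α := .neg (bigAnd (l.map .neg))

def boxIter {α : Type} : ℕ → MForm α → MForm α
  | 0, φ => φ
  | n + 1, φ => .box (boxIter n φ)

def diaIter {α : Type} : ℕ → MForm α → MForm α
  | 0, φ => φ
  | n + 1, φ => MForm.dia (diaIter n φ)

/-- `□^{≤n} φ`. -/
def ble {α : Type} (n : ℕ) (φ : MForm α) : MForm α :=
  bigAnd ((List.range (n + 1)).map (fun k => boxIter k φ))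

/-- `◇^{≤n} φ`. -/
def dle {α : Type} (n : ℕ) (φ : MForm α) : MForm α := .neg (ble n (.neg φ))

def substAtoms {α β : Type} (s : α → MForm β) : MForm α → MForm β
  | .top => .top
  | .atom a => s a
  | .neg φ => .neg (substAtoms s φ)
  | .and φ ψ => .and (substAtoms s φ) (substAtoms s ψ)
  | .box φ => .box (substAtoms s φ)


/-- A finite rooted (pointed) frame. -/
structure FFrame where
  W : Type
  fin : Fintype W
  deq : DecidableEq W
  R : W → W → Prop
  root : W
  rooted : ∀ w, Relation.ReflTransGen R root w

attribute [instance] FFrame.fin FFrame.deq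

def sat (F : FFrame) (V : F.W → ℕ → Prop) : F.W → MForm ℕ → Prop
  | _, .top => True
  | w, .atom p => V w p
  | w, .neg φ => ¬ sat F V w φ
  | w, .and φ ψ => sat F V w φ ∧ sat F V w ψ
  | w, .box φ => ∀ v, F.R w v → sat F V v φ

/-- The logic determined by a (finite) family of finite rooted frames. -/
def Log {ι : Type} (Fr : ι → FFrame) : Set (MForm ℕ) :=
  {φ | ∀ i, ∀ V : (Fr i).W → ℕ → Prop, sat (Fr i) V (Fr i).root φ}

def StrImp (L : Set (MForm ℕ)) (σ : Finset ℕ) (φ χ : MForm ℕ) : Prop :=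
  χ.sig ⊆ σ ∧ φ.imp χ ∈ L ∧
    ∀ ψ : MForm ℕ, ψ.sig ⊆ σ → φ.imp ψ ∈ L → χ.imp ψ ∈ L

def CraigInt (L : Set (MForm ℕ)) (φ ψ χ : MForm ℕ) : Prop :=
  φ.imp χ ∈ L ∧ χ.imp ψ ∈ L ∧ χ.sig ⊆ φ.sig ∩ ψ.sig

def HasCIP (L : Set (MForm ℕ)) : Prop :=
  ∀ φ ψ : MForm ℕ, φ.imp ψ ∈ L → ∃ χ, CraigInt L φ ψ χ

def IsBisim (σ : Finset ℕ) (F₁ : FFrame) (V₁ : F₁.W → ℕ → Prop)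
    (F₂ : FFrame) (V₂ : F₂.W → ℕ → Prop) (Z : F₁.W → F₂.W → Prop) : Prop :=
  (∀ w₁ w₂, Z w₁ w₂ → ∀ p ∈ σ, (V₁ w₁ p ↔ V₂ w₂ p)) ∧
  (∀ w₁ w₂ v₁, Z w₁ w₂ → F₁.R w₁ v₁ → ∃ v₂, F₂.R w₂ v₂ ∧ Z v₁ v₂) ∧
  (∀ w₁ w₂ v₂, Z w₁ w₂ → F₂.R w₂ v₂ → ∃ v₁, F₁.R w₁ v₁ ∧ Z v₁ v₂)

def Bisim (σ : Finset ℕ) (F₁ : FFrame) (V₁ : F₁.W → ℕ → Prop) (w₁ : F₁.W)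
    (F₂ : FFrame) (V₂ : F₂.W → ℕ → Prop) (w₂ : F₂.W) : Prop :=
  ∃ Z, IsBisim σ F₁ V₁ F₂ V₂ Z ∧ Z w₁ w₂

def IsEME (σ : Finset ℕ) (Φ : Finset (MForm ℕ)) : Prop :=
  (∀ φ ∈ Φ, φ.IsProp ∧ φ.sig ⊆ σ) ∧
  (∀ v : ℕ → Prop, ∃ φ ∈ Φ, psat v φ) ∧
  (∀ φ ∈ Φ, ∀ ψ ∈ Φ, φ ≠ ψ → ∀ v : ℕ → Prop, ¬ (psat v φ ∧ psat v ψ))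

def IsCover (σ : Finset ℕ) (Φ : Finset (MForm ℕ)) (F : FFrame) (V : F.W → ℕ → Prop) : Prop :=
  ∀ φ ∈ Φ, ∀ w₁ w₂, sat F V w₁ φ → sat F V w₂ φ →
    ∀ χ : MForm ℕ, χ.IsProp → χ.sig ⊆ σ → (sat F V w₁ χ ↔ sat F V w₂ χ)

noncomputable def coverFml (σ : Finset ℕ) (Φ : Finset (MForm ℕ)) (N : ℕ) : MForm ℕ :=
  bigAnd (Φ.toList.map (fun φ => bigAnd (σ.toList.map (fun p =>
    MForm.imp (dle N (.and φ (.atom p))) (ble N (MForm.imp φ (.atom p)))))))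

/-- Satisfaction of `ML(Φ)`-formulas on abstract Φ-models `(F,f)`. -/
def asat (F : FFrame) (f : F.W → MForm ℕ) : F.W → MForm (MForm ℕ) → Prop
  | _, .top => True
  | w, .atom φ => f w = φ
  | w, .neg δ => ¬ asat F f w δ
  | w, .and δ₁ δ₂ => asat F f w δ₁ ∧ asat F f w δ₂
  | w, .box δ => ∀ v, F.R w v → asat F f v δ

def AbsBisim (F₁ : FFrame) (f₁ : F₁.W → MForm ℕ)
    (F₂ : FFrame) (f₂ : F₂.W → MForm ℕ) (Z : F₁.W → F₂.W → Prop) : Prop :=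
  (∀ w₁ w₂, Z w₁ w₂ → f₁ w₁ = f₂ w₂) ∧
  (∀ w₁ w₂ v₁, Z w₁ w₂ → F₁.R w₁ v₁ → ∃ v₂, F₂.R w₂ v₂ ∧ Z v₁ v₂) ∧
  (∀ w₁ w₂ v₂, Z w₁ w₂ → F₂.R w₂ v₂ → ∃ v₁, F₁.R w₁ v₁ ∧ Z v₁ v₂)

/-- Abstract Φ-bisimilarity of the roots of two abstract Φ-models. -/
def ABisimRoot (F₁ : FFrame) (f₁ : F₁.W → MForm ℕ) (F₂ : FFrame) (f₂ : F₂.W → MForm ℕ) : Prop :=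
  ∃ Z, AbsBisim F₁ f₁ F₂ f₂ Z ∧ Z F₁.root F₂.root

/-- Viewing a formula of `ML(Φ)` as a modal formula (atoms of `Φ` are formulas). -/
def flatten : MForm (MForm ℕ) → MForm ℕ
  | .top => .top
  | .atom φ => φ
  | .neg δ => .neg (flatten δ)
  | .and δ₁ δ₂ => .and (flatten δ₁) (flatten δ₂)
  | .box δ => .box (flatten δ)

/-- `δ ∈ ML(Φ)` is an abstract class identifier (for the Φ-bisimulation class of some
abstract Φ-model for `L = Log Fr`). -/
def IsClassId {ι : Type} (Fr : ι → FFrame) (Φ : Finset (MForm ℕ)) (δ : MForm (MForm ℕ)) : Prop :=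
  ∃ i, ∃ f : (Fr i).W → MForm ℕ, (∀ w, f w ∈ Φ) ∧
    ∀ j, ∀ f' : (Fr j).W → MForm ℕ, (∀ w, f' w ∈ Φ) →
      (asat (Fr j) f' (Fr j).root δ ↔ ABisimRoot (Fr j) f' (Fr i) f)

/-- A σ-encoding for `L = Log Fr`: a set `Γ` of σ-EMEs together with, for each `Φ ∈ Γ`,
a set `Δ Φ` of abstract class identifiers, such that every model based on a frame of the
family has a σ-cover `Φ ∈ Γ` and satisfies some `δ ∈ Δ Φ` at its root. -/
def IsEncoding {ι : Type} (Fr : ι → FFrame) (σ : Finset ℕ)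
    (Γ : Finset (Finset (MForm ℕ))) (Δ : Finset (MForm ℕ) → Finset (MForm (MForm ℕ))) : Prop :=
  (∀ Φ ∈ Γ, IsEME σ Φ) ∧
  (∀ Φ ∈ Γ, ∀ δ ∈ Δ Φ, MForm.sig δ ⊆ Φ ∧ IsClassId Fr Φ δ) ∧
  (∀ i, ∀ V : (Fr i).W → ℕ → Prop, ∃ Φ ∈ Γ, IsCover σ Φ (Fr i) V ∧
    ∃ δ ∈ Δ Φ, sat (Fr i) V (Fr i).root (flatten δ))

/-- `ξ^f`: replace each atom `p_w` by `◇^{≤N}(f(w) ∧ p)`. -/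
def xiSub (N : ℕ) (F : FFrame) (f : F.W → MForm ℕ) (ξ : MForm (ℕ × F.W)) : MForm ℕ :=
  substAtoms (fun pw => dle N (.and (f pw.2) (.atom pw.1))) ξ

/-- The abstract Φ-models on the frame `F` in the class identified by `δ`. -/
noncomputable def fList (F : FFrame) (Φ : Finset (MForm ℕ)) (δ : MForm (MForm ℕ)) :
    List (F.W → MForm ℕ) :=
  (((@Finset.filter (F.W → {x // x ∈ Φ})
      (fun f => asat F (fun w => (f w).1) F.root δ) (Classical.decPred _)
      Finset.univ)).toList).map (fun f w => (f w).1)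

/-- The backward translation `rt_{F,L}`. -/
noncomputable def rt (σ : Finset ℕ) (N : ℕ)
    (Γ : Finset (Finset (MForm ℕ))) (Δ : Finset (MForm ℕ) → Finset (MForm (MForm ℕ)))
    (F : FFrame) (ξ : MForm (ℕ × F.W)) : MForm ℕ :=
  bigAnd (Γ.toList.map (fun Φ =>
    bigAnd ((Δ Φ).toList.map (fun δ =>
      MForm.imp (.and (coverFml σ Φ N) (flatten δ))
        (bigOr ((fList F Φ δ).map (fun f => xiSub N F f ξ)))))))

/-- The forward translation `tr_{F,w}`. -/
noncomputable def tr (F : FFrame) : MForm ℕ → F.W → MForm (ℕ × F.W)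
  | .top, _ => .top
  | .atom p, w => .atom (p, w)
  | .neg φ, w => .neg (tr F φ w)
  | .and φ ψ, w => .and (tr F φ w) (tr F ψ w)
  | .box φ, w =>
      bigAnd (((@Finset.filter _ (F.R w) (Classical.decPred _) Finset.univ).toList).map
        (fun w' => tr F φ w'))

/-- The propositional valuation `v_M` over the atoms `σ_F = σ × W` induced by a model. -/
def vM (F : FFrame) (V : F.W → ℕ → Prop) : ℕ × F.W → Prop := fun pw => V pw.2 pw.1

/-- Uniform propositional `σ'`-interpolant. -/
def UPropInt {β : Type} [DecidableEq β] (σ' : Finset β) (χ ξ : MForm β) : Prop :=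
  ξ.IsProp ∧ ξ.sig ⊆ σ' ∧ PTaut (χ.imp ξ) ∧
    ∀ ψ : MForm β, ψ.IsProp → ψ.sig ∩ χ.sig ⊆ σ' → PTaut (χ.imp ψ) → PTaut (ξ.imp ψ)

/-- Propositional Craig interpolant for a tautological implication. -/
def PCraig {β : Type} [DecidableEq β] (χ₁ χ₂ ξ : MForm β) : Prop :=
  ξ.IsProp ∧ ξ.sig ⊆ χ₁.sig ∩ χ₂.sig ∧ PTaut (χ₁.imp ξ) ∧ PTaut (ξ.imp χ₂)
/-! ### Auxiliary lemmas -/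

section Aux

open Relation

/-- `k`-step reachability. -/
def nstep {W : Type} (R : W → W → Prop) : ℕ → W → W → Prop
  | 0, a, b => a = b
  | k+1, a, b => ∃ c, R a c ∧ nstep R k c b

lemma nstep_succ_right {W : Type} {R : W → W → Prop} :
    ∀ {k : ℕ} {a b : W}, nstep R (k+1) a b ↔ ∃ c, nstep R k a c ∧ R c b := by
  intro k
  induction k with
  | zero =>
    intro a b
    constructor
    · rintro ⟨c, hac, rfl⟩; exact ⟨a, rfl, hac⟩
    · rintro ⟨c, rfl, hcb⟩; exact ⟨b, hcb, rfl⟩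
  | succ n ih =>
    intro a b
    constructor
    · rintro ⟨c, hac, hc⟩
      obtain ⟨d, hd, hdb⟩ := ih.1 hc
      exact ⟨d, ⟨c, hac, hd⟩, hdb⟩
    · rintro ⟨c, ⟨d, had, hdc⟩, hcb⟩
      exact ⟨d, had, ih.2 ⟨c, hdc, hcb⟩⟩

lemma reflTransGen_iff_nstep {W : Type} {R : W → W → Prop} {a b : W} :
    Relation.ReflTransGen R a b ↔ ∃ k, nstep R k a b := by
  constructor
  · intro h
    induction h with
    | refl => exact ⟨0, rfl⟩
    | tail _ hbc ih =>
      obtain ⟨k, hk⟩ := ih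
      exact ⟨k + 1, nstep_succ_right.2 ⟨_, hk, hbc⟩⟩
  · rintro ⟨k, hk⟩
    induction k generalizing a with
    | zero => cases hk; rfl
    | succ n ih =>
      obtain ⟨c, hac, hc⟩ := hk
      exact Relation.ReflTransGen.head hac (ih hc)

lemma nstep_lt_card {W : Type} [Fintype W] {R : W → W → Prop} {a b : W}
    (h : Relation.ReflTransGen R a b) : ∃ k < Fintype.card W, nstep R k a b := by
  classical
  set T : ℕ → Finset W := fun j => Finset.univ.filter (fun c => ∃ k ≤ j, nstep R k a c)
    with hTdef
  have hmem : ∀ j c, c ∈ T j ↔ ∃ k ≤ j, nstep R k a c := by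
    intro j c; simp [hTdef]
  have hmono : ∀ {j₁ j₂}, j₁ ≤ j₂ → T j₁ ⊆ T j₂ := by
    intro j₁ j₂ hj c hc
    obtain ⟨k, hk, hs⟩ := (hmem _ _).1 hc
    exact (hmem _ _).2 ⟨k, hk.trans hj, hs⟩
  have hstep : ∀ m, T (m+1) ⊆ T m → T (m+2) ⊆ T (m+1) := by
    intro m hsub c hc
    obtain ⟨k, hk, hs⟩ := (hmem _ _).1 hc
    rcases Nat.lt_or_ge k (m+2) with hlt | hge
    · exact (hmem _ _).2 ⟨k, by omega, hs⟩
    · have hkeq : k = m + 2 := by omega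
      subst hkeq
      obtain ⟨d, hd, hdb⟩ := nstep_succ_right.1 hs
      have hdT : d ∈ T m := hsub ((hmem _ _).2 ⟨m+1, le_refl _, hd⟩)
      obtain ⟨k', hk', hs'⟩ := (hmem _ _).1 hdT
      exact (hmem _ _).2 ⟨k' + 1, by omega, nstep_succ_right.2 ⟨d, hs', hdb⟩⟩
  have hstab : ∃ j < Fintype.card W, T (j+1) ⊆ T j := by
    by_contra hcon
    push_neg at hcon
    have hcard : ∀ j, j ≤ Fintype.card W → j + 1 ≤ (T j).card := by
      intro j
      induction j with
      | zero =>
        intro _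
        have : a ∈ T 0 := (hmem _ _).2 ⟨0, le_refl _, rfl⟩
        have := Finset.card_pos.2 ⟨a, this⟩
        omega
      | succ n ih =>
        intro hn
        have h1 := ih (by omega)
        have hss : T n ⊂ T (n+1) :=
          ⟨hmono (by omega), fun hsub => hcon n (by omega) hsub⟩
        have := Finset.card_lt_card hss
        omega
    have h1 := hcard (Fintype.card W) le_rfl
    have h2 : (T (Fintype.card W)).card ≤ Fintype.card W := by
      simpa using Finset.card_le_univ (T (Fintype.card W))
    omega
  obtain ⟨j, hj, hsub⟩ := hstab
  have hall : ∀ m, T (j + m) ⊆ T j := by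
    intro m
    induction m with
    | zero => exact fun c hc => hc
    | succ n ih =>
      have : ∀ n, T (j + n + 1) ⊆ T (j + n) := by
        intro n
        induction n with
        | zero => exact hsub
        | succ m ihm => exact hstep (j + m) ihm
      exact fun c hc => ih (this n hc)
  obtain ⟨k, hk⟩ := reflTransGen_iff_nstep.1 h
  have hb : b ∈ T j := by
    rcases Nat.le_total k j with hkj | hjk
    · exact (hmem _ _).2 ⟨k, hkj, hk⟩
    · obtain ⟨m, rfl⟩ := Nat.exists_eq_add_of_le hjk
      exact hall m ((hmem _ _).2 ⟨j + m, le_refl _, hk⟩)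
  obtain ⟨k', hk', hs'⟩ := (hmem _ _).1 hb
  exact ⟨k', by omega, hs'⟩

/-! ### Satisfaction lemmas -/

lemma sat_imp {F : FFrame} {V : F.W → ℕ → Prop} {w : F.W} {φ ψ : MForm ℕ} :
    sat F V w (φ.imp ψ) ↔ (sat F V w φ → sat F V w ψ) := by
  simp [MForm.imp, sat]

lemma sat_bigAnd {F : FFrame} {V : F.W → ℕ → Prop} {w : F.W} {l : List (MForm ℕ)} :
    sat F V w (bigAnd l) ↔ ∀ φ ∈ l, sat F V w φ := by
  induction l with
  | nil => simp [bigAnd, sat]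
  | cons φ l ih => simp [bigAnd, sat, ih]

lemma sat_bigOr {F : FFrame} {V : F.W → ℕ → Prop} {w : F.W} {l : List (MForm ℕ)} :
    sat F V w (bigOr l) ↔ ∃ φ ∈ l, sat F V w φ := by
  simp only [bigOr, sat, sat_bigAnd]
  simp [sat]

lemma sat_boxIter {F : FFrame} {V : F.W → ℕ → Prop} {φ : MForm ℕ} :
    ∀ {k : ℕ} {w : F.W}, sat F V w (boxIter k φ) ↔ ∀ v, nstep F.R k w v → sat F V v φ := by
  intro k
  induction k with
  | zero => intro w; simp [boxIter, nstep]
  | succ n ih =>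
    intro w
    simp only [boxIter, sat]
    constructor
    · rintro h v ⟨c, hwc, hc⟩
      exact ih.1 (h c hwc) v hc
    · intro h u hu
      exact ih.2 (fun v hv => h v ⟨u, hu, hv⟩)

lemma sat_ble {F : FFrame} {V : F.W → ℕ → Prop} {w : F.W} {φ : MForm ℕ} {N : ℕ} :
    sat F V w (ble N φ) ↔ ∀ k ≤ N, ∀ v, nstep F.R k w v → sat F V v φ := by
  simp only [ble, sat_bigAnd, List.mem_map, List.mem_range]
  constructor
  · rintro h k hk v hv
    exact sat_boxIter.1 (h _ ⟨k, by omega, rfl⟩) v hv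
  · rintro h ψ ⟨k, hk, rfl⟩
    exact sat_boxIter.2 (h k (by omega))

lemma sat_dle {F : FFrame} {V : F.W → ℕ → Prop} {w : F.W} {φ : MForm ℕ} {N : ℕ} :
    sat F V w (dle N φ) ↔ ∃ k ≤ N, ∃ v, nstep F.R k w v ∧ sat F V v φ := by
  simp only [dle, sat, sat_ble]
  push_neg
  simp only [sat, not_not]

lemma sat_dle_root {F : FFrame} {V : F.W → ℕ → Prop} {φ : MForm ℕ} {N : ℕ}
    (hN : Fintype.card F.W ≤ N) :
    sat F V F.root (dle N φ) ↔ ∃ v, sat F V v φ := by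
  rw [sat_dle]
  constructor
  · rintro ⟨k, _, v, _, hs⟩; exact ⟨v, hs⟩
  · rintro ⟨v, hs⟩
    obtain ⟨k, hk, hst⟩ := nstep_lt_card (F.rooted v)
    exact ⟨k, by omega, v, hst, hs⟩

lemma sat_ble_root {F : FFrame} {V : F.W → ℕ → Prop} {φ : MForm ℕ} {N : ℕ}
    (hN : Fintype.card F.W ≤ N) :
    sat F V F.root (ble N φ) ↔ ∀ v, sat F V v φ := by
  rw [sat_ble]
  constructor
  · intro h v
    obtain ⟨k, hk, hst⟩ := nstep_lt_card (F.rooted v)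
    exact h k (by omega) v hst
  · intro h k _ v _; exact h v




/-! ### Propositional lemmas -/

lemma psat_congr {α : Type} [DecidableEq α] {v v' : α → Prop} :
    ∀ {χ : MForm α}, (∀ p ∈ χ.sig, (v p ↔ v' p)) → (psat v χ ↔ psat v' χ) := by
  intro χ
  induction χ with
  | top => intro _; simp [psat]
  | atom p => intro h; simpa [psat, MForm.sig] using h p (by simp [MForm.sig])
  | neg φ ih => intro h; simp only [psat]; rw [ih h]
  | and φ ψ ihφ ihψ =>
    intro h
    simp only [psat]
    rw [ihφ (fun p hp => h p (by simp [MForm.sig, hp])),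
        ihψ (fun p hp => h p (by simp [MForm.sig, hp]))]
  | box φ ih => intro _; simp [psat]

lemma sat_prop {F : FFrame} {V : F.W → ℕ → Prop} {w : F.W} :
    ∀ {χ : MForm ℕ}, χ.IsProp → (sat F V w χ ↔ psat (V w) χ) := by
  intro χ
  induction χ with
  | top => intro _; simp [sat, psat]
  | atom p => intro _; simp [sat, psat]
  | neg φ ih => intro h; simp only [sat, psat]; rw [ih h]
  | and φ ψ ihφ ihψ =>
    rintro ⟨h1, h2⟩
    simp only [sat, psat]
    rw [ihφ h1, ihψ h2]
  | box φ ih => intro h; exact absurd h (by simp [MForm.IsProp])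

lemma sat_substAtoms {α : Type} {F : FFrame} {V : F.W → ℕ → Prop} {w : F.W}
    {s : α → MForm ℕ} : ∀ {ξ : MForm α}, ξ.IsProp →
    (sat F V w (substAtoms s ξ) ↔ psat (fun a => sat F V w (s a)) ξ) := by
  intro ξ
  induction ξ with
  | top => intro _; simp [substAtoms, sat, psat]
  | atom a => intro _; simp [substAtoms, psat]
  | neg φ ih => intro h; simp only [substAtoms, sat, psat]; rw [ih h]
  | and φ ψ ihφ ihψ =>
    rintro ⟨h1, h2⟩
    simp only [substAtoms, sat, psat]
    rw [ihφ h1, ihψ h2]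
  | box φ ih => intro h; exact absurd h (by simp [MForm.IsProp])

/-! ### EME labels -/

noncomputable def emeLabel (Φ : Finset (MForm ℕ))
    (h : ∀ v : ℕ → Prop, ∃ φ ∈ Φ, psat v φ) (v : ℕ → Prop) : MForm ℕ :=
  (h v).choose

lemma emeLabel_mem (Φ : Finset (MForm ℕ)) (h : ∀ v : ℕ → Prop, ∃ φ ∈ Φ, psat v φ)
    (v : ℕ → Prop) : emeLabel Φ h v ∈ Φ := (h v).choose_spec.1

lemma emeLabel_psat (Φ : Finset (MForm ℕ)) (h : ∀ v : ℕ → Prop, ∃ φ ∈ Φ, psat v φ)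
    (v : ℕ → Prop) : psat v (emeLabel Φ h v) := (h v).choose_spec.2

lemma emeLabel_unique {σ : Finset ℕ} {Φ : Finset (MForm ℕ)} (hEME : IsEME σ Φ)
    {v : ℕ → Prop} {ψ : MForm ℕ} (hψ : ψ ∈ Φ) (hsat : psat v ψ) :
    ψ = emeLabel Φ hEME.2.1 v := by
  by_contra hne
  exact hEME.2.2 ψ hψ _ (emeLabel_mem Φ hEME.2.1 v) hne v ⟨hsat, emeLabel_psat Φ hEME.2.1 v⟩

/-! ### flatten and asat -/

lemma sat_flatten {F : FFrame} {V : F.W → ℕ → Prop} {σ : Finset ℕ} {Φ : Finset (MForm ℕ)}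
    (hEME : IsEME σ Φ) {f : F.W → MForm ℕ}
    (hf : ∀ w, f w ∈ Φ ∧ psat (V w) (f w)) :
    ∀ {δ : MForm (MForm ℕ)}, MForm.sig δ ⊆ Φ →
      ∀ w, (sat F V w (flatten δ) ↔ asat F f w δ) := by
  intro δ
  induction δ with
  | top => intro _ w; simp [flatten, sat, asat]
  | atom φ =>
    intro hsig w
    have hφΦ : φ ∈ Φ := hsig (by simp [MForm.sig])
    have hφp : φ.IsProp := (hEME.1 φ hφΦ).1
    simp only [flatten, asat]
    rw [sat_prop hφp]
    constructor
    · intro hs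
      rw [emeLabel_unique hEME hφΦ hs]
      exact emeLabel_unique hEME (hf w).1 (hf w).2
    · intro he; rw [← he]; exact (hf w).2
  | neg δ ih =>
    intro hsig w
    simp only [flatten, sat, asat]
    rw [ih (by simpa [MForm.sig] using hsig) w]
  | and δ₁ δ₂ ih₁ ih₂ =>
    intro hsig w
    simp only [flatten, sat, asat]
    rw [ih₁ (fun x hx => hsig (by simp [MForm.sig, hx])) w,
        ih₂ (fun x hx => hsig (by simp [MForm.sig, hx])) w]
  | box δ ih =>
    intro hsig w
    simp only [flatten, sat, asat]
    constructor
    · intro h v hv; exact (ih (by simpa [MForm.sig] using hsig) v).1 (h v hv)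
    · intro h v hv; exact (ih (by simpa [MForm.sig] using hsig) v).2 (h v hv)

/-! ### Abstract bisimulations -/

lemma asat_invariant {F₁ F₂ : FFrame} {f₁ : F₁.W → MForm ℕ} {f₂ : F₂.W → MForm ℕ}
    {Z : F₁.W → F₂.W → Prop} (hZ : AbsBisim F₁ f₁ F₂ f₂ Z) :
    ∀ {δ : MForm (MForm ℕ)} {w₁ : F₁.W} {w₂ : F₂.W}, Z w₁ w₂ →
      (asat F₁ f₁ w₁ δ ↔ asat F₂ f₂ w₂ δ) := by
  intro δ
  induction δ with
  | top => intro w₁ w₂ _; simp [asat]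
  | atom φ => intro w₁ w₂ h; simp only [asat]; rw [hZ.1 _ _ h]
  | neg δ ih => intro w₁ w₂ h; simp only [asat]; rw [ih h]
  | and δ₁ δ₂ ih₁ ih₂ => intro w₁ w₂ h; simp only [asat]; rw [ih₁ h, ih₂ h]
  | box δ ih =>
    intro w₁ w₂ h
    simp only [asat]
    constructor
    · intro hs v₂ hv₂
      obtain ⟨v₁, hv₁, hZv⟩ := hZ.2.2 _ _ _ h hv₂
      exact (ih hZv).1 (hs v₁ hv₁)
    · intro hs v₁ hv₁
      obtain ⟨v₂, hv₂, hZv⟩ := hZ.2.1 _ _ _ h hv₁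
      exact (ih hZv).2 (hs v₂ hv₂)

lemma absBisim_symm {F₁ F₂ : FFrame} {f₁ : F₁.W → MForm ℕ} {f₂ : F₂.W → MForm ℕ}
    {Z : F₁.W → F₂.W → Prop} (hZ : AbsBisim F₁ f₁ F₂ f₂ Z) :
    AbsBisim F₂ f₂ F₁ f₁ (fun a b => Z b a) :=
  ⟨fun w₂ w₁ h => (hZ.1 _ _ h).symm,
   fun w₂ w₁ v₂ h hr => hZ.2.2 _ _ _ h hr,
   fun w₂ w₁ v₁ h hr => hZ.2.1 _ _ _ h hr⟩

lemma absBisim_comp {F₁ F₂ F₃ : FFrame} {f₁ : F₁.W → MForm ℕ} {f₂ : F₂.W → MForm ℕ}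
    {f₃ : F₃.W → MForm ℕ} {Z : F₁.W → F₂.W → Prop} {Z' : F₂.W → F₃.W → Prop}
    (hZ : AbsBisim F₁ f₁ F₂ f₂ Z) (hZ' : AbsBisim F₂ f₂ F₃ f₃ Z') :
    AbsBisim F₁ f₁ F₃ f₃ (fun a c => ∃ b, Z a b ∧ Z' b c) := by
  refine ⟨?_, ?_, ?_⟩
  · rintro w₁ w₃ ⟨w₂, h1, h2⟩
    rw [hZ.1 _ _ h1, hZ'.1 _ _ h2]
  · rintro w₁ w₃ v₁ ⟨w₂, h1, h2⟩ hr
    obtain ⟨v₂, hr₂, hz₂⟩ := hZ.2.1 _ _ _ h1 hr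
    obtain ⟨v₃, hr₃, hz₃⟩ := hZ'.2.1 _ _ _ h2 hr₂
    exact ⟨v₃, hr₃, v₂, hz₂, hz₃⟩
  · rintro w₁ w₃ v₃ ⟨w₂, h1, h2⟩ hr
    obtain ⟨v₂, hr₂, hz₂⟩ := hZ'.2.2 _ _ _ h2 hr
    obtain ⟨v₁, hr₁, hz₁⟩ := hZ.2.2 _ _ _ h1 hr₂
    exact ⟨v₁, hr₁, v₂, hz₁, hz₂⟩

/-- From a σ-bisimulation relating roots, every world of the second model is
related to some world of the first. -/
lemma bisim_back_total {σ : Finset ℕ} {F₁ F₂ : FFrame} {V₁ : F₁.W → ℕ → Prop}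
    {V₂ : F₂.W → ℕ → Prop} {Z : F₁.W → F₂.W → Prop}
    (hZ : IsBisim σ F₁ V₁ F₂ V₂ Z) {w₁ : F₁.W} (hroot : Z w₁ F₂.root) :
    ∀ w₂ : F₂.W, ∃ u, Z u w₂ := by
  intro w₂
  have h := F₂.rooted w₂
  induction h with
  | refl => exact ⟨w₁, hroot⟩
  | tail hab hbc ih =>
    obtain ⟨u, hu⟩ := ih
    obtain ⟨v, _, hv⟩ := hZ.2.2 _ _ _ hu hbc
    exact ⟨v, hv⟩

/-! ### fList membership -/

lemma mem_fList {F : FFrame} {Φ : Finset (MForm ℕ)} {δ : MForm (MForm ℕ)}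
    {g : F.W → MForm ℕ} :
    g ∈ fList F Φ δ ↔ (∀ w, g w ∈ Φ) ∧ asat F g F.root δ := by
  classical
  unfold fList
  simp only [List.mem_map, Finset.mem_toList, Finset.mem_filter, Finset.mem_univ, true_and]
  constructor
  · rintro ⟨f, hf, rfl⟩
    exact ⟨fun w => (f w).2, hf⟩
  · rintro ⟨hmem, hsat⟩
    exact ⟨fun w => ⟨g w, hmem w⟩, hsat, rfl⟩

/-! ### coverFml -/

lemma sat_coverFml {F : FFrame} {V : F.W → ℕ → Prop} {σ : Finset ℕ}
    {Φ : Finset (MForm ℕ)} {N : ℕ} (hN : Fintype.card F.W ≤ N) :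
    sat F V F.root (coverFml σ Φ N) ↔
      ∀ φ ∈ Φ, ∀ p ∈ σ, (∃ u, sat F V u φ ∧ V u p) → ∀ v, sat F V v φ → V v p := by
  unfold coverFml
  rw [sat_bigAnd]
  simp only [List.mem_map, Finset.mem_toList]
  constructor
  · rintro h φ hφ p hp ⟨u, huφ, hup⟩ v hvφ
    have h1 := h _ ⟨φ, hφ, rfl⟩
    rw [sat_bigAnd] at h1
    have h2 := h1 _ (by exact List.mem_map.2 ⟨p, Finset.mem_toList.2 hp, rfl⟩)
    rw [sat_imp] at h2
    have h3 := h2 ((sat_dle_root hN).2 ⟨u, huφ, hup⟩)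
    rw [sat_ble_root hN] at h3
    have h4 := h3 v
    rw [sat_imp] at h4
    exact h4 hvφ
  · rintro h ψ ⟨φ, hφ, rfl⟩
    rw [sat_bigAnd]
    simp only [List.mem_map, Finset.mem_toList]
    rintro χ ⟨p, hp, rfl⟩
    rw [sat_imp]
    intro hd
    rw [sat_ble_root hN]
    intro v
    rw [sat_imp]
    intro hvφ
    obtain ⟨u, hu⟩ := (sat_dle_root hN).1 hd
    exact h φ hφ p hp ⟨u, hu.1, hu.2⟩ v hvφ

/-! ### rt unfolding -/

lemma sat_rt {F₀ : FFrame} {V : F₀.W → ℕ → Prop} {w : F₀.W} {σ : Finset ℕ} {N : ℕ}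
    {Γ : Finset (Finset (MForm ℕ))} {Δ : Finset (MForm ℕ) → Finset (MForm (MForm ℕ))}
    {F : FFrame} {ξ : MForm (ℕ × F.W)} :
    sat F₀ V w (rt σ N Γ Δ F ξ) ↔
      ∀ Φ ∈ Γ, ∀ δ ∈ Δ Φ,
        sat F₀ V w (coverFml σ Φ N) → sat F₀ V w (flatten δ) →
          ∃ f ∈ fList F Φ δ, sat F₀ V w (xiSub N F f ξ) := by
  unfold rt
  rw [sat_bigAnd]
  simp only [List.mem_map, Finset.mem_toList]
  constructor
  · rintro h Φ hΦ δ hδ hc hf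
    have h1 := h _ ⟨Φ, hΦ, rfl⟩
    rw [sat_bigAnd] at h1
    have h2 := h1 _ (List.mem_map.2 ⟨δ, Finset.mem_toList.2 hδ, rfl⟩)
    rw [sat_imp] at h2
    have h3 := h2 (by exact ⟨hc, hf⟩)
    rw [sat_bigOr] at h3
    obtain ⟨ψ, hψ, hs⟩ := h3
    obtain ⟨f, hfmem, rfl⟩ := List.mem_map.1 hψ
    exact ⟨f, hfmem, hs⟩
  · rintro h ψ ⟨Φ, hΦ, rfl⟩
    rw [sat_bigAnd]
    simp only [List.mem_map, Finset.mem_toList]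
    rintro χ ⟨δ, hδ, rfl⟩
    rw [sat_imp]
    rintro ⟨hc, hfl⟩
    obtain ⟨f, hfmem, hs⟩ := h Φ hΦ δ hδ hc hfl
    rw [sat_bigOr]
    exact ⟨_, List.mem_map.2 ⟨f, hfmem, rfl⟩, hs⟩

end Aux

/-- for a tabular quasi-normal logic `L = Log Fr` (a finite family of finite
rooted frames), a σ-encoding `(Γ,Δ)` for `L`, a frame `Fr i₀` of the family,
`ξ ∈ PL(σ_{Fr i₀})` and a model `(M,0)` based on a frame `Fr i` of the family:
`M,0 ⊨ rt_{F,L}(ξ)` iff there is a model `M'` based on `Fr i₀` with `M,0 ∼_σ M',0`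
and `v_{M'} ⊨ ξ`.  Here `N = max{|F| : F ∈ 𝓕_L}`. -/
theorem stmt8 {ι : Type} [Fintype ι] (Fr : ι → FFrame) (σ : Finset ℕ)
    (Γ : Finset (Finset (MForm ℕ))) (Δ : Finset (MForm ℕ) → Finset (MForm (MForm ℕ)))
    (henc : IsEncoding Fr σ Γ Δ)
    (i₀ : ι) (ξ : MForm (ℕ × (Fr i₀).W)) (hξp : ξ.IsProp)
    (hξσ : ξ.sig ⊆ σ ×ˢ Finset.univ)
    (i : ι) (V : (Fr i).W → ℕ → Prop) :
    sat (Fr i) V (Fr i).root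
        (rt σ (Finset.univ.sup (fun j => Fintype.card (Fr j).W)) Γ Δ (Fr i₀) ξ) ↔
      ∃ V' : (Fr i₀).W → ℕ → Prop,
        Bisim σ (Fr i) V (Fr i).root (Fr i₀) V' (Fr i₀).root ∧
        psat (vM (Fr i₀) V') ξ := by
  classical
  set N := Finset.univ.sup (fun j => Fintype.card (Fr j).W) with hNdef
  have hN : ∀ j : ι, Fintype.card (Fr j).W ≤ N := by
    intro j
    rw [hNdef]
    exact Finset.le_sup (f := fun j => Fintype.card (Fr j).W) (Finset.mem_univ j)
  constructor
  · -- forward direction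
    intro hrt
    obtain ⟨Φ, hΦΓ, hcov, δ, hδΔ, hδsat⟩ := henc.2.2 i V
    have hEME := henc.1 Φ hΦΓ
    obtain ⟨hsig, hclass⟩ := henc.2.1 Φ hΦΓ δ hδΔ
    have hfM : ∀ w, (fun w => emeLabel Φ hEME.2.1 (V w)) w ∈ Φ ∧
        psat (V w) ((fun w => emeLabel Φ hEME.2.1 (V w)) w) :=
      fun w => ⟨emeLabel_mem _ _ _, emeLabel_psat _ _ _⟩
    have hcovSat : sat (Fr i) V (Fr i).root (coverFml σ Φ N) := by
      rw [sat_coverFml (hN i)]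
      rintro φ hφ p hp ⟨u, huφ, hup⟩ v hvφ
      have h := hcov φ hφ u v huφ hvφ (.atom p) trivial (by simp [MForm.sig, hp])
      simp only [sat] at h
      exact h.1 hup
    obtain ⟨f, hfmem, hxis⟩ := sat_rt.1 hrt Φ hΦΓ δ hδΔ hcovSat hδsat
    obtain ⟨hfΦ, hfasat⟩ := mem_fList.1 hfmem
    have hasatM : asat (Fr i) (fun w => emeLabel Φ hEME.2.1 (V w)) (Fr i).root δ :=
      (sat_flatten hEME hfM hsig _).1 hδsat
    obtain ⟨i', fstar, hfstarΦ, hcid⟩ := hclass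
    have h1 : ABisimRoot (Fr i) (fun w => emeLabel Φ hEME.2.1 (V w)) (Fr i') fstar :=
      (hcid i _ (fun w => (hfM w).1)).1 hasatM
    have h2 : ABisimRoot (Fr i₀) f (Fr i') fstar := (hcid i₀ f hfΦ).1 hfasat
    obtain ⟨Z₁, hZ₁, hZ₁r⟩ := h1
    obtain ⟨Z₂, hZ₂, hZ₂r⟩ := h2
    have hZc : AbsBisim (Fr i) (fun w => emeLabel Φ hEME.2.1 (V w)) (Fr i₀) f
        (fun a c => ∃ b, Z₁ a b ∧ Z₂ c b) := absBisim_comp hZ₁ (absBisim_symm hZ₂)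
    set Z : (Fr i).W → (Fr i₀).W → Prop := fun a c => ∃ b, Z₁ a b ∧ Z₂ c b with hZdef
    set V' : (Fr i₀).W → ℕ → Prop :=
      fun w p => p ∈ σ ∧ ∃ u, sat (Fr i) V u (f w) ∧ V u p with hV'def
    have hsatf : ∀ u w, Z u w → sat (Fr i) V u (f w) := by
      intro u w hzw
      have he : (fun w => emeLabel Φ hEME.2.1 (V w)) u = f w := hZc.1 u w hzw
      rw [sat_prop (hEME.1 _ (hfΦ w)).1, ← he]
      exact (hfM u).2
    have hbisim : IsBisim σ (Fr i) V (Fr i₀) V' Z := by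
      refine ⟨?_, hZc.2.1, hZc.2.2⟩
      intro u w hzw p hp
      constructor
      · intro hup
        exact ⟨hp, u, hsatf u w hzw, hup⟩
      · rintro ⟨-, u', hu'f, hu'p⟩
        have h := hcov (f w) (hfΦ w) u' u hu'f (hsatf u w hzw) (.atom p) trivial
          (by simp [MForm.sig, hp])
        simp only [sat] at h
        exact h.1 hu'p
    refine ⟨V', ⟨Z, hbisim, ⟨(Fr i').root, hZ₁r, hZ₂r⟩⟩, ?_⟩
    unfold xiSub at hxis
    rw [sat_substAtoms hξp] at hxis
    refine (psat_congr ?_).1 hxis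
    rintro ⟨p, w⟩ hpw
    have hp : p ∈ σ := (Finset.mem_product.1 (hξσ hpw)).1
    constructor
    · intro hd
      obtain ⟨u, hu⟩ := (sat_dle_root (hN i)).1 hd
      simp only [sat] at hu
      exact ⟨hp, u, hu.1, hu.2⟩
    · rintro ⟨-, u, huf, hup⟩
      exact (sat_dle_root (hN i)).2 ⟨u, huf, hup⟩
  · -- backward direction
    rintro ⟨V', ⟨Z, hZ, hZr⟩, hψ⟩
    rw [sat_rt]
    intro Φ hΦΓ δ hδΔ hcovSat hflat
    have hEME := henc.1 Φ hΦΓ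
    obtain ⟨hsig, -⟩ := henc.2.1 Φ hΦΓ δ hδΔ
    have hfM : ∀ w, (fun w => emeLabel Φ hEME.2.1 (V w)) w ∈ Φ ∧
        psat (V w) ((fun w => emeLabel Φ hEME.2.1 (V w)) w) :=
      fun w => ⟨emeLabel_mem _ _ _, emeLabel_psat _ _ _⟩
    have hf' : ∀ w, (fun w => emeLabel Φ hEME.2.1 (V' w)) w ∈ Φ ∧
        psat (V' w) ((fun w => emeLabel Φ hEME.2.1 (V' w)) w) :=
      fun w => ⟨emeLabel_mem _ _ _, emeLabel_psat _ _ _⟩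
    have hlabel : ∀ u w, Z u w →
        (fun w => emeLabel Φ hEME.2.1 (V w)) u = (fun w => emeLabel Φ hEME.2.1 (V' w)) w := by
      intro u w hzw
      have hagree : ∀ p ∈ (emeLabel Φ hEME.2.1 (V' w)).sig, (V' w p ↔ V u p) :=
        fun p hp => (hZ.1 u w hzw p ((hEME.1 _ (hf' w).1).2 hp)).symm
      have hps : psat (V u) (emeLabel Φ hEME.2.1 (V' w)) := (psat_congr hagree).1 (hf' w).2
      exact (emeLabel_unique hEME (hf' w).1 hps).symm
    have hZabs : AbsBisim (Fr i) (fun w => emeLabel Φ hEME.2.1 (V w))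
        (Fr i₀) (fun w => emeLabel Φ hEME.2.1 (V' w)) Z := ⟨hlabel, hZ.2.1, hZ.2.2⟩
    have hasatM : asat (Fr i) (fun w => emeLabel Φ hEME.2.1 (V w)) (Fr i).root δ :=
      (sat_flatten hEME hfM hsig _).1 hflat
    have hasat' : asat (Fr i₀) (fun w => emeLabel Φ hEME.2.1 (V' w)) (Fr i₀).root δ :=
      (asat_invariant hZabs hZr).1 hasatM
    refine ⟨_, mem_fList.2 ⟨fun w => (hf' w).1, hasat'⟩, ?_⟩
    unfold xiSub
    rw [sat_substAtoms hξp]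
    refine (psat_congr ?_).2 hψ
    rintro ⟨p, w⟩ hpw
    have hp : p ∈ σ := (Finset.mem_product.1 (hξσ hpw)).1
    obtain ⟨u, hzu⟩ := bisim_back_total hZ hZr w
    have hufw : sat (Fr i) V u (emeLabel Φ hEME.2.1 (V' w)) := by
      rw [sat_prop (hEME.1 _ (hf' w).1).1, ← hlabel u w hzu]
      exact (hfM u).2
    constructor
    · intro hd
      obtain ⟨u₀, hu₀⟩ := (sat_dle_root (hN i)).1 hd
      simp only [sat] at hu₀
      have h5 := (sat_coverFml (hN i)).1 hcovSat _ (hf' w).1 p hp ⟨u₀, hu₀.1, hu₀.2⟩ u hufw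
      exact (hZ.1 u w hzu p hp).1 h5
    · intro hv
      refine (sat_dle_root (hN i)).2 ⟨u, ?_⟩
      exact ⟨hufw, (hZ.1 u w hzu p hp).2 hv⟩
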